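/- Let K be a set of n points in PG(k−1,4) such that every hyperplane meets K in a number of points of the same parity as n, with associated [n,k]₄ code C (generated by representative column vectors). Then every codeword of C has even weight, and therefore C is Hermitian self-orthogonal. -/
import Mathlib

abbrev F4 : Type := GaloisField 2 2

noncomputable def hammingWt {n : ℕ} {F : Type*} [Zero F] (x : Fin n → F) : ℕ :=
  {i : Fin n | x i ≠ 0}.ncard

instance F4_factp : Fact (Nat.Prime 2) := ⟨Nat.prime_two⟩

noncomputable instance F4_fintype : Fintype F4 := Fintype.ofFinite _

lemma F4_card : Fintype.card F4 = 4 := by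
  have h := GaloisField.card 2 2 (by norm_num)
  rw [← Nat.card_eq_fintype_card, h]; norm_num

lemma F4_two : (2 : F4) = 0 := by
  have := CharP.cast_eq_zero F4 2; exact_mod_cast this

lemma F4_neg (x : F4) : -x = x := by linear_combination (-x) * F4_two

lemma F4_cube {x : F4} (hx : x ≠ 0) : x ^ 3 = 1 := by
  have h := FiniteField.pow_card_sub_one_eq_one x hx
  rwa [F4_card] at h

lemma F4_pow4 (x : F4) : x ^ 4 = x := by
  have := FiniteField.pow_card x; rwa [F4_card] at this

lemma F4_sq_self {x : F4} (h : x ^ 2 = x) : x = 0 ∨ x = 1 := by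
  have hx : x * (x - 1) = 0 := by linear_combination h
  rcases mul_eq_zero.mp hx with h | h
  · exact Or.inl h
  · exact Or.inr (sub_eq_zero.mp h)

lemma F4_omega : ∃ ω : F4, ω ^ 2 + ω = 1 ∧ ω ≠ 0 := by
  classical
  have hcard : (({0, 1} : Finset F4)).card ≤ 2 :=
    Finset.card_insert_le _ _ |>.trans (by simp)
  have huniv : (Finset.univ : Finset F4).card = 4 := by rw [Finset.card_univ, F4_card]
  have hne : (Finset.univ \ ({0, 1} : Finset F4)).Nonempty := by
    rw [← Finset.card_pos, Finset.card_sdiff_of_subset (Finset.subset_univ _)]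
    omega
  obtain ⟨ω, hω⟩ := hne
  rw [Finset.mem_sdiff, Finset.mem_insert, Finset.mem_singleton] at hω
  push_neg at hω
  obtain ⟨-, hω0, hω1⟩ := hω
  refine ⟨ω, ?_, hω0⟩
  have hsq : (ω ^ 2 + ω) ^ 2 = ω ^ 2 + ω := by
    linear_combination F4_pow4 ω + (ω ^ 3) * F4_two
  rcases F4_sq_self hsq with h | h
  · exfalso
    have : ω * (ω + 1) = 0 := by linear_combination h
    rcases mul_eq_zero.mp this with h' | h'
    · exact hω0 h'
    · exact hω1 (by linear_combination h' - F4_two)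
  · exact h

lemma setOf_ncard_eq {n : ℕ} (p : Fin n → Prop) [DecidablePred p] :
    {i : Fin n | p i}.ncard = (Finset.univ.filter p).card := by
  rw [Set.ncard_eq_toFinset_card']
  congr 1
  ext i
  simp

/-- Let K be a set of n points in PG(k−1,4), with spanning, nonzero, pairwise
non-proportional representatives g₁,…,gₙ, such that every hyperplane ker φ meets K in
a number of points of the same parity as n. Then every codeword (φ(g₁),…,φ(gₙ)) of
the associated [n,k]₄ code has even weight, and the code is Hermitian self-orthogonal. -/
theorem stmt_19 {n k : ℕ} (g : Fin n → (Fin k → F4)) (hg : ∀ i, g i ≠ 0)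
    (hprop : ∀ i j, i ≠ j → ∀ c : F4, g i ≠ c • g j)
    (hspan : Submodule.span F4 (Set.range g) = ⊤)
    (hpar : ∀ φ : (Fin k → F4) →ₗ[F4] F4, φ ≠ 0 →
      {i : Fin n | φ (g i) = 0}.ncard % 2 = n % 2) :
    (∀ φ : (Fin k → F4) →ₗ[F4] F4, Even (hammingWt (fun i => φ (g i)))) ∧
    (∀ φ ψ : (Fin k → F4) →ₗ[F4] F4, ∑ i, φ (g i) * (ψ (g i)) ^ 2 = 0) := by
  classical
  -- Part 1: all weights even
  have part1 : ∀ φ : (Fin k → F4) →ₗ[F4] F4, Even (hammingWt (fun i => φ (g i))) := by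
    intro φ
    by_cases hφ : φ = 0
    · simp [hφ, hammingWt]
    · have hp := hpar φ hφ
      have hcompl : hammingWt (fun i => φ (g i)) + {i : Fin n | φ (g i) = 0}.ncard = n := by
        have := Set.ncard_add_ncard_compl {i : Fin n | φ (g i) ≠ 0}
        simp only [hammingWt]
        rw [show ({i : Fin n | φ (g i) ≠ 0}ᶜ : Set (Fin n)) = {i : Fin n | φ (g i) = 0} by
          ext i; simp] at this
        simpa using this
      rw [Nat.even_iff]
      omega
  refine ⟨part1, ?_⟩
  -- key: diagonal vanishes
  have key : ∀ φ : (Fin k → F4) →ₗ[F4] F4, ∑ i, φ (g i) * (φ (g i)) ^ 2 = 0 := by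
    intro φ
    have hterm : ∀ i : Fin n, φ (g i) * (φ (g i)) ^ 2 = if φ (g i) ≠ 0 then 1 else 0 := by
      intro i
      by_cases h : φ (g i) = 0
      · simp [h]
      · rw [if_pos h, show φ (g i) * (φ (g i)) ^ 2 = φ (g i) ^ 3 by ring, F4_cube h]
    rw [Finset.sum_congr rfl fun i _ => hterm i, Finset.sum_ite, Finset.sum_const,
      Finset.sum_const, smul_zero, add_zero, nsmul_eq_mul, mul_one]
    have heven : Even ((Finset.univ.filter fun i => φ (g i) ≠ 0).card) := by
      have := part1 φ
      rwa [hammingWt, setOf_ncard_eq] at this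
    obtain ⟨t, ht⟩ := heven
    rw [ht]
    push_cast
    linear_combination (t : F4) * F4_two
  -- symmetrized form vanishes
  have hB : ∀ φ ψ : (Fin k → F4) →ₗ[F4] F4,
      (∑ i, φ (g i) * (ψ (g i)) ^ 2) + (∑ i, ψ (g i) * (φ (g i)) ^ 2) = 0 := by
    intro φ ψ
    have h1 := key (φ + ψ)
    have hterm : ∀ i : Fin n, (φ + ψ) (g i) * ((φ + ψ) (g i)) ^ 2 =
        φ (g i) * (φ (g i)) ^ 2 + ψ (g i) * (ψ (g i)) ^ 2 +
        (φ (g i) * (ψ (g i)) ^ 2 + ψ (g i) * (φ (g i)) ^ 2) := by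
      intro i
      simp only [LinearMap.add_apply]
      linear_combination (φ (g i) ^ 2 * ψ (g i) + φ (g i) * ψ (g i) ^ 2) * F4_two
    rw [Finset.sum_congr rfl fun i _ => hterm i] at h1
    rw [Finset.sum_add_distrib, Finset.sum_add_distrib, Finset.sum_add_distrib,
      key φ, key ψ] at h1
    linear_combination h1
  intro φ ψ
  obtain ⟨ω, hω1, hω0⟩ := F4_omega
  have hω3 : ω ^ 3 = 1 := F4_cube hω0
  have h1 := key (φ + ω • ψ)
  have hterm : ∀ i : Fin n, (φ + ω • ψ) (g i) * ((φ + ω • ψ) (g i)) ^ 2 =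
      φ (g i) * (φ (g i)) ^ 2 + ψ (g i) * (ψ (g i)) ^ 2 +
      (ω ^ 2 * (φ (g i) * (ψ (g i)) ^ 2) + ω * (ψ (g i) * (φ (g i)) ^ 2)) := by
    intro i
    simp only [LinearMap.add_apply, LinearMap.smul_apply, smul_eq_mul]
    linear_combination (ω * φ (g i) ^ 2 * ψ (g i) + ω ^ 2 * φ (g i) * ψ (g i) ^ 2) * F4_two
      + (ψ (g i) * ψ (g i) ^ 2) * hω3
  rw [Finset.sum_congr rfl fun i _ => hterm i, Finset.sum_add_distrib, Finset.sum_add_distrib,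
    Finset.sum_add_distrib, key φ, key ψ, ← Finset.mul_sum, ← Finset.mul_sum] at h1
  have hsymm := hB φ ψ
  -- from h1: ω^2 * B + ω * B' = 0 and B' = B gives (ω^2+ω)*B = B = 0
  have hB' : (∑ i, ψ (g i) * (φ (g i)) ^ 2) = ∑ i, φ (g i) * (ψ (g i)) ^ 2 := by
    have := F4_neg (∑ i, φ (g i) * (ψ (g i)) ^ 2)
    linear_combination hsymm + this
  rw [hB'] at h1
  calc ∑ i, φ (g i) * (ψ (g i)) ^ 2
      = (ω ^ 2 + ω) * ∑ i, φ (g i) * (ψ (g i)) ^ 2 := by rw [hω1, one_mul]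
    _ = 0 := by linear_combination h1
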